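/- arXiv:2011.10576 — 2 statements merged into one kernel-verified Lean document; each statement's English description precedes it below -/
import Mathlib

section
/- Assume (C1) and that there exist φ₁, ψ₁ ∈ H_sm with L(φ₁, ψ₁) = λ₀ := sup{L(u,v) : u, v ∈ H}, σ²_X(φ₁) > 0 and σ²_Y(ψ₁) > 0. Then λ_τ := sup{L_τ(u,v) : u, v ∈ H_sm, u ≠ 0, v ≠ 0} converges to λ₀ as τ → 0⁺. -/
open Filter
open scoped RealInnerProductSpace Topology

namespace RSCCA

variable {H : Type*} [NormedAddCommGroup H] [InnerProductSpace ℝ H]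

/-- The scale functional `σ²(u) = ⟪u, G u⟫` associated with a diagonal block `G`. -/
noncomputable def sigSq (G : H →L[ℝ] H) (u : H) : ℝ := ⟪u, G u⟫

/-- The co-association functional `γ(u,v) = ⟪u, G12 v⟫`. -/
noncomputable def gam (G12 : H →L[ℝ] H) (u v : H) : ℝ := ⟪u, G12 v⟫

/-- The squared association `L(u,v) = γ(u,v)²/(σ²_X(u) σ²_Y(v))`.  In `ℝ`, division by `0`
equals `0`, which matches the convention `L(u,v) = 0` whenever `σ²_X(u) = 0` or
`σ²_Y(v) = 0` (the factors are nonnegative under (C1)). -/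
noncomputable def Lfun (G11 G12 G22 : H →L[ℝ] H) (u v : H) : ℝ :=
  gam G12 u v ^ 2 / (sigSq G11 u * sigSq G22 v)

/-- `λ₀ = sup {L(u,v) : u, v ∈ H}`. -/
noncomputable def lam0 (G11 G12 G22 : H →L[ℝ] H) : ℝ :=
  sSup {x : ℝ | ∃ u v : H, x = Lfun G11 G12 G22 u v}

/-- `L^X(u₁,u₂)` (and `L^Y`, by using the block `Γ₂₂`). -/
noncomputable def LXfun (G : H →L[ℝ] H) (u₁ u₂ : H) : ℝ :=
  ⟪u₁, G u₂⟫ ^ 2 / (⟪u₁, G u₁⟫ * ⟪u₂, G u₂⟫)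

/-- (C1): `G11, G12, G21, G22` are the blocks of a self-adjoint, positive semidefinite,
compact bounded linear operator on `H × H` (stated blockwise, which is equivalent). -/
structure C1 (G11 G12 G21 G22 : H →L[ℝ] H) : Prop where
  sa11 : ∀ u v : H, ⟪G11 u, v⟫ = ⟪u, G11 v⟫
  sa22 : ∀ u v : H, ⟪G22 u, v⟫ = ⟪u, G22 v⟫
  adj : ∀ u v : H, ⟪u, G12 v⟫ = ⟪G21 u, v⟫
  pos : ∀ u v : H, 0 ≤ ⟪u, G11 u⟫ + 2 * ⟪u, G12 v⟫ + ⟪v, G22 v⟫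
  cpt11 : IsCompactOperator (⇑G11)
  cpt12 : IsCompactOperator (⇑G12)
  cpt21 : IsCompactOperator (⇑G21)
  cpt22 : IsCompactOperator (⇑G22)

/-- The penalty functional `Ψ(u) = ‖D u‖²` on the smooth subspace. -/
noncomputable def Psi {Hsm : Submodule ℝ H} (D : Hsm →ₗ[ℝ] H) (u : Hsm) : ℝ := ‖D u‖ ^ 2

/-- The penalized association `L_τ(u,v)` on the smooth subspace. -/
noncomputable def Lpen (G11 G12 G22 : H →L[ℝ] H) {Hsm : Submodule ℝ H} (D : Hsm →ₗ[ℝ] H)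
    (τ : ℝ) (u v : Hsm) : ℝ :=
  gam G12 (u : H) (v : H) ^ 2 /
    ((sigSq G11 (u : H) + τ * Psi D u) * (sigSq G22 (v : H) + τ * Psi D v))

/-- (C2): existence of first canonical directions `φ₁, ψ₁`, maximality, spectral gap and
uniqueness up to sign. -/
structure C2 (G11 G12 G22 : H →L[ℝ] H) {Hsm : Submodule ℝ H} (φ₁ ψ₁ : Hsm) (ρ₀ : ℝ) :
    Prop where
  norm_phi : ‖(φ₁ : H)‖ = 1
  norm_psi : ‖(ψ₁ : H)‖ = 1
  rho_pos : 0 < ρ₀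
  max_val : Lfun G11 G12 G22 (φ₁ : H) (ψ₁ : H) = ρ₀ ^ 2
  le_max : ∀ u v : H, Lfun G11 G12 G22 u v ≤ ρ₀ ^ 2
  gap : ∃ ρ₁ : ℝ, 0 ≤ ρ₁ ∧ ρ₁ < ρ₀ ∧ ∀ u v : H,
    ⟪u, G11 (φ₁ : H)⟫ = 0 → ⟪v, G22 (ψ₁ : H)⟫ = 0 → Lfun G11 G12 G22 u v ≤ ρ₁
  unique : ∀ φ ψ : Hsm, ‖(φ : H)‖ = 1 → ‖(ψ : H)‖ = 1 →
    Lfun G11 G12 G22 (φ : H) (ψ : H) = ρ₀ ^ 2 → (φ = φ₁ ∧ ψ = ψ₁) ∨ (φ = -φ₁ ∧ ψ = -ψ₁)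

/-- (C3a). -/
def C3a (G11 G22 : H →L[ℝ] H) {Hsm : Submodule ℝ H} (D : Hsm →ₗ[ℝ] H) : Prop :=
  ∀ u : Hsm, u ≠ 0 → Psi D u = 0 → 0 < sigSq G11 (u : H) ∧ 0 < sigSq G22 (u : H)

/-- (C3b): the null space `N` of `Ψ` is finite dimensional and `Ψ` dominates `d ‖·‖²`
on `H_sm ∩ N^⊥`. -/
def C3b {Hsm : Submodule ℝ H} (D : Hsm →ₗ[ℝ] H) : Prop :=
  FiniteDimensional ℝ (LinearMap.ker D) ∧
    ∃ d : ℝ, 0 < d ∧ ∀ u : Hsm, u ≠ 0 →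
      (u : H) ∈ ((LinearMap.ker D).map Hsm.subtype)ᗮ → d * ‖(u : H)‖ ^ 2 < Psi D u

/-- Sample setup: nonnegativity and (bi)homogeneity of the sample scale and
co-association functionals. -/
structure SampleSetup {Hsm : Submodule ℝ H} (sX sY : Hsm → ℝ) (g : Hsm → Hsm → ℝ) :
    Prop where
  sX_nonneg : ∀ u, 0 ≤ sX u
  sY_nonneg : ∀ v, 0 ≤ sY v
  sX_homog : ∀ (a : ℝ) (u), sX (a • u) = a ^ 2 * sX u
  sY_homog : ∀ (a : ℝ) (v), sY (a • v) = a ^ 2 * sY v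
  g_homog : ∀ (a b : ℝ) (u v), g (a • u) (b • v) = a * b * g u v

/-- The empirical penalized association `L̂_τ(u,v)`. -/
noncomputable def Lhat {Hsm : Submodule ℝ H} (D : Hsm →ₗ[ℝ] H) (sX sY : Hsm → ℝ)
    (g : Hsm → Hsm → ℝ) (τ : ℝ) (u v : Hsm) : ℝ :=
  g u v ^ 2 / ((sX u + τ * Psi D u) * (sY v + τ * Psi D v))

/-- `C_{n,X}` (resp. `C_{n,Y}` taking `G = Γ₂₂`, `s = s²_{n,Y}`): the supremum of
`|s²_n(u) − σ²(u)|` over `u ∈ H_sm` with `‖u‖²_{τ} = σ²(u) + τΨ(u) = 1`. -/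
noncomputable def Cerr (G : H →L[ℝ] H) {Hsm : Submodule ℝ H} (D : Hsm →ₗ[ℝ] H)
    (s : Hsm → ℝ) (τ : ℝ) : ℝ :=
  sSup {x : ℝ | ∃ u : Hsm, sigSq G (u : H) + τ * Psi D u = 1 ∧ x = |s u - sigSq G (u : H)|}

/-- `C_{n,XY}`. -/
noncomputable def CerrXY (G11 G12 G22 : H →L[ℝ] H) {Hsm : Submodule ℝ H}
    (D : Hsm →ₗ[ℝ] H) (g : Hsm → Hsm → ℝ) (τ : ℝ) : ℝ :=
  sSup {x : ℝ | ∃ u v : Hsm, sigSq G11 (u : H) + τ * Psi D u = 1 ∧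
    sigSq G22 (v : H) + τ * Psi D v = 1 ∧ x = |g u v - gam G12 (u : H) (v : H)|}

/-- (C4a). -/
def C4a (G11 G12 G22 : H →L[ℝ] H) {Hsm : Submodule ℝ H} (D : Hsm →ₗ[ℝ] H)
    (sX sY : ℕ → Hsm → ℝ) (g : ℕ → Hsm → Hsm → ℝ) (τ : ℕ → ℝ) : Prop :=
  (∀ n, 0 ≤ τ n) ∧ Tendsto τ atTop (𝓝 0) ∧
    Tendsto (fun n => Cerr G11 D (sX n) (τ n)) atTop (𝓝 0) ∧
    Tendsto (fun n => Cerr G22 D (sY n) (τ n)) atTop (𝓝 0) ∧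
    Tendsto (fun n => CerrXY G11 G12 G22 D (g n) (τ n)) atTop (𝓝 0) ∧
    ∃ A : ℝ, 0 < A ∧ ∀ (n : ℕ) (u v : Hsm), u ≠ 0 → v ≠ 0 →
      Lhat D (sX n) (sY n) (g n) (τ n) u v ≤ A

/-- (C4b). -/
def C4b (G11 G12 G22 : H →L[ℝ] H) {Hsm : Submodule ℝ H} (D : Hsm →ₗ[ℝ] H)
    (sX sY : ℕ → Hsm → ℝ) (g : ℕ → Hsm → Hsm → ℝ) (τ : ℕ → ℝ) : Prop :=
  (∀ n, 0 ≤ τ n) ∧ Tendsto τ atTop (𝓝 0) ∧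
    Tendsto (fun n => Cerr G11 D (sX n) (τ n)) atTop (𝓝 0) ∧
    Tendsto (fun n => Cerr G22 D (sY n) (τ n)) atTop (𝓝 0) ∧
    ∃ (r : ℕ → Hsm → Hsm → ℝ) (ρXY : H → H → ℝ),
      (∀ n u v, |r n u v| ≤ 1) ∧ (∀ u v, |ρXY u v| ≤ 1) ∧
      (∀ n u v, g n u v = r n u v * Real.sqrt (sX n u) * Real.sqrt (sY n v)) ∧
      (∀ u v : H, gam G12 u v = ρXY u v * Real.sqrt (sigSq G11 u) * Real.sqrt (sigSq G22 v)) ∧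
      Tendsto (fun n => sSup {x : ℝ | ∃ u v : Hsm, ‖(u : H)‖ = 1 ∧ ‖(v : H)‖ = 1 ∧
        x = |r n u v - ρXY (u : H) (v : H)|}) atTop (𝓝 0)

/-- The sieve space `H_d`, spanned by the first `d` basis elements. -/
def Hd (ξ : ℕ → H) (d : ℕ) : Submodule ℝ H := Submodule.span ℝ (ξ '' Set.Iio d)

/-- The orthogonal projection `Π_{H_d} u`, as an element of `H_sm`
(each basis element lies in `H_sm`). -/
noncomputable def projSm {Hsm : Submodule ℝ H} (ξ : ℕ → H) (hξ : ∀ i, ξ i ∈ Hsm)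
    (d : ℕ) (u : H) : Hsm :=
  ∑ i ∈ Finset.range d, ⟪ξ i, u⟫ • (⟨ξ i, hξ i⟩ : Hsm)

/-- Sieve setup: `ξ` is an orthonormal basis of `H` whose elements are smooth, and
`d_n → ∞`. -/
structure SieveSetup (Hsm : Submodule ℝ H) (ξ : ℕ → H) (dn : ℕ → ℕ) : Prop where
  orth : Orthonormal ℝ ξ
  total : (Submodule.span ℝ (Set.range ξ)).topologicalClosure = ⊤
  mem : ∀ i, ξ i ∈ Hsm
  dn_tendsto : Tendsto dn atTop atTop

/-- `D_{n,X}` (resp. `D_{n,Y}`). -/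
noncomputable def Derr (G : H →L[ℝ] H) {Hsm : Submodule ℝ H} (D : Hsm →ₗ[ℝ] H)
    (ξ : ℕ → H) (d : ℕ) (s : Hsm → ℝ) (τ : ℝ) : ℝ :=
  sSup {x : ℝ | ∃ u : Hsm, (u : H) ∈ Hd ξ d ∧ sigSq G (u : H) + τ * Psi D u = 1 ∧
    x = |s u - sigSq G (u : H)|}

/-- `D_{n,XY}`. -/
noncomputable def DerrXY (G11 G12 G22 : H →L[ℝ] H) {Hsm : Submodule ℝ H}
    (D : Hsm →ₗ[ℝ] H) (ξ : ℕ → H) (d : ℕ) (g : Hsm → Hsm → ℝ) (τ : ℝ) : ℝ :=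
  sSup {x : ℝ | ∃ u v : Hsm, (u : H) ∈ Hd ξ d ∧ (v : H) ∈ Hd ξ d ∧
    sigSq G11 (u : H) + τ * Psi D u = 1 ∧ sigSq G22 (v : H) + τ * Psi D v = 1 ∧
    x = |g u v - gam G12 (u : H) (v : H)|}

/-- (C5a). -/
def C5a (G11 G12 G22 : H →L[ℝ] H) {Hsm : Submodule ℝ H} (D : Hsm →ₗ[ℝ] H)
    (ξ : ℕ → H) (dn : ℕ → ℕ) (sX sY : ℕ → Hsm → ℝ) (g : ℕ → Hsm → Hsm → ℝ)
    (τ : ℕ → ℝ) : Prop :=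
  (∀ n, 0 ≤ τ n) ∧ Tendsto τ atTop (𝓝 0) ∧
    Tendsto (fun n => Derr G11 D ξ (dn n) (sX n) (τ n)) atTop (𝓝 0) ∧
    Tendsto (fun n => Derr G22 D ξ (dn n) (sY n) (τ n)) atTop (𝓝 0) ∧
    Tendsto (fun n => DerrXY G11 G12 G22 D ξ (dn n) (g n) (τ n)) atTop (𝓝 0) ∧
    ∃ A : ℝ, 0 < A ∧ ∀ (n : ℕ) (u v : Hsm), u ≠ 0 → v ≠ 0 →
      Lhat D (sX n) (sY n) (g n) (τ n) u v ≤ A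

/-- (C5b). -/
def C5b (G11 G12 G22 : H →L[ℝ] H) {Hsm : Submodule ℝ H} (D : Hsm →ₗ[ℝ] H)
    (ξ : ℕ → H) (dn : ℕ → ℕ) (sX sY : ℕ → Hsm → ℝ) (g : ℕ → Hsm → Hsm → ℝ)
    (τ : ℕ → ℝ) : Prop :=
  (∀ n, 0 ≤ τ n) ∧ Tendsto τ atTop (𝓝 0) ∧
    Tendsto (fun n => Derr G11 D ξ (dn n) (sX n) (τ n)) atTop (𝓝 0) ∧
    Tendsto (fun n => Derr G22 D ξ (dn n) (sY n) (τ n)) atTop (𝓝 0) ∧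
    ∃ (r : ℕ → Hsm → Hsm → ℝ) (ρXY : H → H → ℝ),
      (∀ n u v, |r n u v| ≤ 1) ∧ (∀ u v, |ρXY u v| ≤ 1) ∧
      (∀ n u v, g n u v = r n u v * Real.sqrt (sX n u) * Real.sqrt (sY n v)) ∧
      (∀ u v : H, gam G12 u v = ρXY u v * Real.sqrt (sigSq G11 u) * Real.sqrt (sigSq G22 v)) ∧
      Tendsto (fun n => sSup {x : ℝ | ∃ u v : Hsm, (u : H) ∈ Hd ξ (dn n) ∧
        (v : H) ∈ Hd ξ (dn n) ∧ sigSq G11 (u : H) + τ n * Psi D u = 1 ∧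
        sigSq G22 (v : H) + τ n * Psi D v = 1 ∧
        x = |r n u v - ρXY (u : H) (v : H)|}) atTop (𝓝 0)

/-- `ζ_n` (resp. `ν_n` with `G = Γ₂₂`): sup over unit vectors of `H_sm`. -/
noncomputable def zeta (G : H →L[ℝ] H) {Hsm : Submodule ℝ H} (s : Hsm → ℝ) : ℝ :=
  sSup {x : ℝ | ∃ u : Hsm, ‖(u : H)‖ = 1 ∧ x = |s u - sigSq G (u : H)|}

/-- `η_n`. -/
noncomputable def eta (G12 : H →L[ℝ] H) {Hsm : Submodule ℝ H} (g : Hsm → Hsm → ℝ) : ℝ :=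
  sSup {x : ℝ | ∃ u v : Hsm, ‖(u : H)‖ = 1 ∧ ‖(v : H)‖ = 1 ∧
    x = |g u v - gam G12 (u : H) (v : H)|}

/-- `ℓᵢ(τ) = inf {⟪u, Γᵢᵢ u⟫ + τ Ψ(u) : u ∈ H_sm, ‖u‖ = 1}`. -/
noncomputable def ell (G : H →L[ℝ] H) {Hsm : Submodule ℝ H} (D : Hsm →ₗ[ℝ] H)
    (τ : ℝ) : ℝ :=
  sInf {x : ℝ | ∃ u : Hsm, ‖(u : H)‖ = 1 ∧ x = sigSq G (u : H) + τ * Psi D u}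


/-!
For `τ ≥ 0` the penalty only enlarges the denominator, so `L_τ ≤ L ≤ λ₀` wherever the
denominator of `L` is positive, and where it vanishes Cauchy–Schwarz for the positive
semidefinite form of (C1) forces `γ = 0`; hence `λ_τ ≤ λ₀`. Conversely
`λ_τ ≥ L_τ(φ₁, ψ₁)`, which is continuous in `τ` and tends to `L(φ₁, ψ₁) = λ₀` because the
denominator `σ²_X(φ₁) σ²_Y(ψ₁)` is positive.
-/

/-- `λ_τ`. -/
noncomputable def lamPen (G11 G12 G22 : H →L[ℝ] H) {Hsm : Submodule ℝ H} (D : Hsm →ₗ[ℝ] H)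
    (τ : ℝ) : ℝ :=
  sSup {x : ℝ | ∃ u v : Hsm, u ≠ 0 ∧ v ≠ 0 ∧ x = Lpen G11 G12 G22 D τ u v}

lemma Psi_nonneg {Hsm : Submodule ℝ H} (D : Hsm →ₗ[ℝ] H) (u : Hsm) : 0 ≤ Psi D u :=
  sq_nonneg _

lemma Lfun_zero_zero (G11 G12 G22 : H →L[ℝ] H) : Lfun G11 G12 G22 0 0 = 0 := by
  simp [Lfun, sigSq]

lemma tendsto_Lpen_nhds_zero (G11 G12 G22 : H →L[ℝ] H) {Hsm : Submodule ℝ H}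
    (D : Hsm →ₗ[ℝ] H) {u v : Hsm} (huv : sigSq G11 (u : H) * sigSq G22 (v : H) ≠ 0) :
    Tendsto (fun τ => Lpen G11 G12 G22 D τ u v) (𝓝 0) (𝓝 (Lfun G11 G12 G22 u v)) := by
  have hden : Tendsto (fun τ : ℝ =>
      (sigSq G11 (u : H) + τ * Psi D u) * (sigSq G22 (v : H) + τ * Psi D v)) (𝓝 0)
      (𝓝 (sigSq G11 (u : H) * sigSq G22 (v : H))) := by
    simpa using (show Continuous fun τ : ℝ =>
      (sigSq G11 (u : H) + τ * Psi D u) * (sigSq G22 (v : H) + τ * Psi D v) by fun_prop).tendsto 0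
  exact tendsto_const_nhds.div hden huv

namespace C1

variable {G11 G12 G21 G22 : H →L[ℝ] H}

lemma sigSq_left_nonneg (h : C1 G11 G12 G21 G22) (u : H) : 0 ≤ sigSq G11 u := by
  simpa [sigSq] using h.pos u 0

lemma sigSq_right_nonneg (h : C1 G11 G12 G21 G22) (v : H) : 0 ≤ sigSq G22 v := by
  simpa [sigSq] using h.pos 0 v

lemma gam_sq_le (h : C1 G11 G12 G21 G22) (u v : H) :
    gam G12 u v ^ 2 ≤ sigSq G11 u * sigSq G22 v := by
  have hquad : ∀ t : ℝ, 0 ≤ sigSq G11 u * (t * t) + 2 * gam G12 u v * t + sigSq G22 v := by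
    intro t
    have := h.pos (t • u) v
    simp only [map_smul, real_inner_smul_left, real_inner_smul_right] at this
    simp only [sigSq, gam]
    linarith
  have := discrim_le_zero hquad
  rw [discrim] at this
  linarith

lemma Lfun_le_one (h : C1 G11 G12 G21 G22) (u v : H) : Lfun G11 G12 G22 u v ≤ 1 :=
  div_le_one_of_le₀ (by simpa using h.gam_sq_le u v)
    (mul_nonneg (h.sigSq_left_nonneg u) (h.sigSq_right_nonneg v))

lemma Lfun_le_lam0 (h : C1 G11 G12 G21 G22) (u v : H) :
    Lfun G11 G12 G22 u v ≤ lam0 G11 G12 G22 :=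
  le_csSup ⟨1, by rintro _ ⟨u, v, rfl⟩; exact h.Lfun_le_one u v⟩ ⟨u, v, rfl⟩

lemma Lpen_le_Lfun (h : C1 G11 G12 G21 G22) {Hsm : Submodule ℝ H} (D : Hsm →ₗ[ℝ] H)
    {τ : ℝ} (hτ : 0 ≤ τ) (u v : Hsm) :
    Lpen G11 G12 G22 D τ u v ≤ Lfun G11 G12 G22 (u : H) (v : H) := by
  have hu := h.sigSq_left_nonneg (u : H)
  have hv := h.sigSq_right_nonneg (v : H)
  have hPu := mul_nonneg hτ (Psi_nonneg D u)
  have hPv := mul_nonneg hτ (Psi_nonneg D v)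
  rcases (mul_nonneg hu hv).eq_or_lt with hzero | hpos
  · have hgam : gam G12 (u : H) (v : H) ^ 2 = 0 :=
      le_antisymm (hzero ▸ h.gam_sq_le (u : H) (v : H)) (sq_nonneg _)
    simp [Lpen, Lfun, hgam]
  · exact div_le_div_of_nonneg_left (sq_nonneg _) hpos
      (mul_le_mul (by linarith) (by linarith) hv (by linarith))

lemma Lpen_le_lam0 (h : C1 G11 G12 G21 G22) {Hsm : Submodule ℝ H} (D : Hsm →ₗ[ℝ] H)
    {τ : ℝ} (hτ : 0 ≤ τ) (u v : Hsm) : Lpen G11 G12 G22 D τ u v ≤ lam0 G11 G12 G22 :=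
  (h.Lpen_le_Lfun D hτ u v).trans (h.Lfun_le_lam0 _ _)

lemma lamPen_le_lam0 (h : C1 G11 G12 G21 G22) {Hsm : Submodule ℝ H} (D : Hsm →ₗ[ℝ] H)
    {τ : ℝ} (hτ : 0 ≤ τ) : lamPen G11 G12 G22 D τ ≤ lam0 G11 G12 G22 :=
  Real.sSup_le (by rintro _ ⟨u, v, -, -, rfl⟩; exact h.Lpen_le_lam0 D hτ u v)
    (Lfun_zero_zero G11 G12 G22 ▸ h.Lfun_le_lam0 0 0)

lemma Lpen_le_lamPen (h : C1 G11 G12 G21 G22) {Hsm : Submodule ℝ H} (D : Hsm →ₗ[ℝ] H)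
    {τ : ℝ} (hτ : 0 ≤ τ) {u v : Hsm} (hu : u ≠ 0) (hv : v ≠ 0) :
    Lpen G11 G12 G22 D τ u v ≤ lamPen G11 G12 G22 D τ :=
  le_csSup ⟨lam0 G11 G12 G22, by rintro _ ⟨u, v, -, -, rfl⟩; exact h.Lpen_le_lam0 D hτ u v⟩
    ⟨u, v, hu, hv, rfl⟩

end C1

theorem statement1_general
    (G11 G12 G21 G22 : H →L[ℝ] H) {Hsm : Submodule ℝ H} (D : Hsm →ₗ[ℝ] H)
    (hC1 : C1 G11 G12 G21 G22) (φ₁ ψ₁ : Hsm)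
    (hmax : Lfun G11 G12 G22 (φ₁ : H) (ψ₁ : H) = lam0 G11 G12 G22)
    (hX : 0 < sigSq G11 (φ₁ : H)) (hY : 0 < sigSq G22 (ψ₁ : H)) :
    Tendsto (fun τ : ℝ => sSup {x : ℝ | ∃ u v : Hsm, u ≠ 0 ∧ v ≠ 0 ∧
        x = Lpen G11 G12 G22 D τ u v}) (𝓝[>] 0) (𝓝 (lam0 G11 G12 G22)) := by
  change Tendsto (lamPen G11 G12 G22 D) (𝓝[>] 0) (𝓝 (lam0 G11 G12 G22))
  have hφ₁ : φ₁ ≠ 0 := by rintro rfl; simp [sigSq] at hX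
  have hψ₁ : ψ₁ ≠ 0 := by rintro rfl; simp [sigSq] at hY
  have hlower : Tendsto (fun τ => Lpen G11 G12 G22 D τ φ₁ ψ₁) (𝓝[>] 0)
      (𝓝 (lam0 G11 G12 G22)) :=
    hmax ▸ (tendsto_Lpen_nhds_zero G11 G12 G22 D (mul_pos hX hY).ne').mono_left
      nhdsWithin_le_nhds
  refine tendsto_of_tendsto_of_tendsto_of_le_of_le' hlower tendsto_const_nhds ?_ ?_ <;>
    filter_upwards [self_mem_nhdsWithin] with τ (hτ : 0 < τ)
  · exact hC1.Lpen_le_lamPen D hτ.le hφ₁ hψ₁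
  · exact hC1.lamPen_le_lam0 D hτ.le

/-- under (C1), if `φ₁, ψ₁ ∈ H_sm` attain `λ₀` and have positive scales,
then `λ_τ → λ₀` as `τ → 0⁺`. -/
theorem statement1 [CompleteSpace H] [TopologicalSpace.SeparableSpace H]
    (G11 G12 G21 G22 : H →L[ℝ] H) {Hsm : Submodule ℝ H} (D : Hsm →ₗ[ℝ] H)
    (hC1 : C1 G11 G12 G21 G22) (φ₁ ψ₁ : Hsm)
    (hmax : Lfun G11 G12 G22 (φ₁ : H) (ψ₁ : H) = lam0 G11 G12 G22)
    (hX : 0 < sigSq G11 (φ₁ : H)) (hY : 0 < sigSq G22 (ψ₁ : H)) :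
    Tendsto (fun τ : ℝ => sSup {x : ℝ | ∃ u v : Hsm, u ≠ 0 ∧ v ≠ 0 ∧
        x = Lpen G11 G12 G22 D τ u v}) (𝓝[>] 0) (𝓝 (lam0 G11 G12 G22)) :=
  statement1_general G11 G12 G21 G22 D hC1 φ₁ ψ₁ hmax hX hY

end RSCCA
end

section
/- (Lemma A.3) Assume (C1), (C3a), (C3b) and that H_sm ≠ {0}. For τ > 0 let ℓ₁(τ) = inf{⟨u, Γ₁₁ u⟩ + τΨ(u) : u ∈ H_sm, ‖u‖ = 1} and ℓ₂(τ) = inf{⟨u, Γ₂₂ u⟩ + τΨ(u) : u ∈ H_sm, ‖u‖ = 1}. Then for every 0 < τ ≤ 1 one has ℓ₁(τ) ≥ τ ℓ₁(1) > 0 and ℓ₂(τ) ≥ τ ℓ₂(1) > 0. -/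
/-! The bound `τ ℓ(1) ≤ ℓ(τ)` holds termwise: `τ (σ²(u) + Ψ(u)) ≤ σ²(u) + τ Ψ(u)` since
`σ² ≥ 0` and `τ ≤ 1`. For `ℓ(1) > 0`, take unit vectors `uₖ` with `σ²(uₖ) + Ψ(uₖ) → 0`.
By (C3b) the distance from `uₖ` to the null space `N` is at most `(Ψ(uₖ)/d)^(1/2) → 0`, and `N`
is finite dimensional, so a subsequence converges to a unit vector of `N` on which `σ²`
vanishes, contradicting (C3a). -/

open Filter
open scoped RealInnerProductSpace Topology

namespace RSCCA

variable {H : Type*} [NormedAddCommGroup H] [InnerProductSpace ℝ H]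

lemma continuous_sigSq (G : H →L[ℝ] H) : Continuous (sigSq G) :=
  continuous_id.inner G.continuous

lemma C1.sigSq_X_nonneg {G11 G12 G21 G22 : H →L[ℝ] H} (h : C1 G11 G12 G21 G22) (u : H) :
    0 ≤ sigSq G11 u := by
  simpa [sigSq] using h.pos u 0

lemma C1.sigSq_Y_nonneg {G11 G12 G21 G22 : H →L[ℝ] H} (h : C1 G11 G12 G21 G22) (v : H) :
    0 ≤ sigSq G22 v := by
  simpa [sigSq] using h.pos 0 v

section ell

variable {G : H →L[ℝ] H} {Hsm : Submodule ℝ H} {D : Hsm →ₗ[ℝ] H} {τ : ℝ}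

lemma ell_le (hG : ∀ u, 0 ≤ sigSq G u) (hτ : 0 ≤ τ) {u : Hsm} (hu : ‖(u : H)‖ = 1) :
    ell G D τ ≤ sigSq G u + τ * Psi D u :=
  csInf_le ⟨0, by
    rintro x ⟨v, -, rfl⟩
    exact add_nonneg (hG v) (mul_nonneg hτ (Psi_nonneg D v))⟩ ⟨u, hu, rfl⟩

lemma le_ell (hne : Hsm ≠ ⊥) {c : ℝ}
    (hc : ∀ u : Hsm, ‖(u : H)‖ = 1 → c ≤ sigSq G u + τ * Psi D u) : c ≤ ell G D τ := by
  have := Submodule.nontrivial_iff_ne_bot.mpr hne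
  obtain ⟨u, hu⟩ := exists_norm_eq Hsm zero_le_one
  exact le_csInf ⟨_, u, hu, rfl⟩ (by rintro x ⟨v, hv, rfl⟩; exact hc v hv)

lemma mul_ell_one_le_ell (hG : ∀ u, 0 ≤ sigSq G u) (hne : Hsm ≠ ⊥) (hτ₀ : 0 ≤ τ)
    (hτ₁ : τ ≤ 1) : τ * ell G D 1 ≤ ell G D τ :=
  le_ell hne fun u hu => calc
    τ * ell G D 1 ≤ τ * (sigSq G u + 1 * Psi D u) :=
      mul_le_mul_of_nonneg_left (ell_le hG zero_le_one hu) hτ₀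
    _ ≤ sigSq G u + τ * Psi D u := by nlinarith [hG u]

end ell

section nullSpace

variable {Hsm : Submodule ℝ H} (D : Hsm →ₗ[ℝ] H)

def nullSpace : Submodule ℝ H := (LinearMap.ker D).map Hsm.subtype

instance [FiniteDimensional ℝ (LinearMap.ker D)] : FiniteDimensional ℝ (nullSpace D) :=
  Module.Finite.map _ _

variable {D}

lemma mul_norm_sub_orthogonalProjectionOnto_sq_le [FiniteDimensional ℝ (LinearMap.ker D)]
    {d : ℝ} (hd : ∀ u : Hsm, u ≠ 0 → (u : H) ∈ (nullSpace D)ᗮ → d * ‖(u : H)‖ ^ 2 < Psi D u)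
    (u : Hsm) :
    d * ‖(u : H) - (nullSpace D).orthogonalProjectionOnto u‖ ^ 2 ≤ Psi D u := by
  obtain ⟨z, hz, hzu⟩ := ((nullSpace D).orthogonalProjectionOnto (u : H)).2
  have hw : ((u - z : Hsm) : H) = (u : H) - (nullSpace D).orthogonalProjectionOnto u := by
    simp [← hzu]
  have hΨ : Psi D (u - z) = Psi D u := by simp [Psi, LinearMap.mem_ker.mp hz]
  rw [← hw, ← hΨ]
  rcases eq_or_ne (u - z) 0 with h | h
  · simp [h, Psi]
  · refine (hd _ h ?_).le
    rw [hw, ← Submodule.starProjection_apply]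
    exact Submodule.sub_starProjection_mem_orthogonal _

lemma C3b.exists_subseq_tendsto_mem_nullSpace (hC3b : C3b D) {R : ℝ} {u : ℕ → Hsm}
    (hu : ∀ k, ‖(u k : H)‖ ≤ R) (hΨ : Tendsto (fun k => Psi D (u k)) atTop (𝓝 0)) :
    ∃ v ∈ nullSpace D, ∃ φ : ℕ → ℕ, StrictMono φ ∧
      Tendsto (fun k => (u (φ k) : H)) atTop (𝓝 v) := by
  obtain ⟨_, d, hd, hdom⟩ := hC3b
  set P := (nullSpace D).orthogonalProjectionOnto
  have hres : Tendsto (fun k => (u k : H) - P (u k)) atTop (𝓝 0) := by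
    have hsq : Tendsto (fun k => ‖(u k : H) - P (u k)‖ ^ 2) atTop (𝓝 0) :=
      squeeze_zero (fun _ => sq_nonneg _)
        (fun k => (le_div_iff₀' hd).2 (mul_norm_sub_orthogonalProjectionOnto_sq_le hdom (u k)))
        (by simpa using hΨ.div_const d)
    simpa [tendsto_zero_iff_norm_tendsto_zero] using hsq.sqrt
  have hball : ∀ k, P (u k) ∈ Metric.closedBall 0 R := fun k => by
    simpa using (Submodule.norm_orthogonalProjectionOnto_apply_le _ _).trans (hu k)
  obtain ⟨v, -, φ, hφ, hlim⟩ := (isCompact_closedBall (0 : nullSpace D) R).tendsto_subseq hball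
  refine ⟨v, v.2, φ, hφ, ?_⟩
  simpa using (hres.comp hφ.tendsto_atTop).add (continuous_subtype_val.tendsto v |>.comp hlim)

end nullSpace

lemma ell_one_pos {G : H →L[ℝ] H} {Hsm : Submodule ℝ H} {D : Hsm →ₗ[ℝ] H}
    (hG : ∀ u, 0 ≤ sigSq G u) (hC3a : ∀ u : Hsm, u ≠ 0 → Psi D u = 0 → 0 < sigSq G u)
    (hC3b : C3b D) (hne : Hsm ≠ ⊥) : 0 < ell G D 1 := by
  by_contra! hle
  have hsmall : ∀ k : ℕ, ∃ u : Hsm, ‖(u : H)‖ = 1 ∧ sigSq G u + 1 * Psi D u < 1 / (k + 1) := by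
    intro k
    by_contra! hk
    linarith [le_ell hne hk, (by positivity : (0 : ℝ) < 1 / (k + 1))]
  choose u hu hlt using hsmall
  have hσ : Tendsto (fun k => sigSq G (u k)) atTop (𝓝 0) :=
    squeeze_zero (fun k => hG _) (fun k => by linarith [hlt k, Psi_nonneg D (u k)])
      tendsto_one_div_add_atTop_nhds_zero_nat
  have hΨ : Tendsto (fun k => Psi D (u k)) atTop (𝓝 0) :=
    squeeze_zero (fun k => Psi_nonneg D _) (fun k => by linarith [hlt k, hG (u k)])
      tendsto_one_div_add_atTop_nhds_zero_nat
  obtain ⟨v, hvN, φ, hφ, hlim⟩ := hC3b.exists_subseq_tendsto_mem_nullSpace (fun k => (hu k).le) hΨ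
  have hv : ‖v‖ = 1 := tendsto_nhds_unique hlim.norm (by simp [hu])
  have hσv : sigSq G v = 0 :=
    tendsto_nhds_unique (((continuous_sigSq G).tendsto v).comp hlim) (hσ.comp hφ.tendsto_atTop)
  obtain ⟨z, hz, rfl⟩ := hvN
  have hz0 : z ≠ 0 := by rintro rfl; simp at hv
  exact (hC3a z hz0 (by simp [Psi, LinearMap.mem_ker.mp hz])).ne' hσv

theorem statement11_general
    (G11 G12 G21 G22 : H →L[ℝ] H) {Hsm : Submodule ℝ H} (D : Hsm →ₗ[ℝ] H)
    (hC1 : C1 G11 G12 G21 G22) (hC3a : C3a G11 G22 D) (hC3b : C3b D)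
    (hne : Hsm ≠ ⊥) :
    ∀ τ : ℝ, 0 < τ → τ ≤ 1 →
      (τ * ell G11 D 1 ≤ ell G11 D τ ∧ 0 < τ * ell G11 D 1) ∧
        (τ * ell G22 D 1 ≤ ell G22 D τ ∧ 0 < τ * ell G22 D 1) := by
  intro τ hτ₀ hτ₁
  have hX := ell_one_pos hC1.sigSq_X_nonneg (fun u hu h => (hC3a u hu h).1) hC3b hne
  have hY := ell_one_pos hC1.sigSq_Y_nonneg (fun u hu h => (hC3a u hu h).2) hC3b hne
  exact ⟨⟨mul_ell_one_le_ell hC1.sigSq_X_nonneg hne hτ₀.le hτ₁, mul_pos hτ₀ hX⟩,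
    ⟨mul_ell_one_le_ell hC1.sigSq_Y_nonneg hne hτ₀.le hτ₁, mul_pos hτ₀ hY⟩⟩

/-- Lemma A.3: for `0 < τ ≤ 1`, `ℓ₁(τ) ≥ τ ℓ₁(1) > 0` and
`ℓ₂(τ) ≥ τ ℓ₂(1) > 0`. -/
theorem statement11 [CompleteSpace H] [TopologicalSpace.SeparableSpace H]
    (G11 G12 G21 G22 : H →L[ℝ] H) {Hsm : Submodule ℝ H} (D : Hsm →ₗ[ℝ] H)
    (hC1 : C1 G11 G12 G21 G22) (hC3a : C3a G11 G22 D) (hC3b : C3b D)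
    (hne : Hsm ≠ ⊥) :
    ∀ τ : ℝ, 0 < τ → τ ≤ 1 →
      (τ * ell G11 D 1 ≤ ell G11 D τ ∧ 0 < τ * ell G11 D 1) ∧
        (τ * ell G22 D 1 ≤ ell G22 D τ ∧ 0 < τ * ell G22 D 1) :=
  statement11_general G11 G12 G21 G22 D hC1 hC3a hC3b hne

end RSCCA
end
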